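/- The relaxed dual value equals the system dual value: W_dr = W_ds. In particular, for every fixed λ ∈ ℝ_+^{m×k} and every z ∈ ℝ^{n×k} with z_i(l) ≥ z_i(l+1) for all i, l, the supremum over doubly stochastic profiles (M_i) ∈ Ω_k^n of U(z) + Σ_j λ_j^T(c_j𝟙 − Σ_{i∈R_j} M_i z_i) is attained at a profile of permutation matrices. -/

import Mathlib

open Finset

noncomputable section

/-- `nxt z l` is `z (l+1)`, with the convention `z (k+1) = 0`. -/
def nxt {k : ℕ} (z : Fin k → ℝ) (l : Fin k) : ℝ :=
  if h : (l : ℕ) + 1 < k then z ⟨(l : ℕ) + 1, h⟩ else 0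

/-- `z` is an ordered allocation: `z i l ≥ z i (l+1)` for all `i, l` (with `z i (k+1) = 0`). -/
def OrdAlloc {n k : ℕ} (z : Fin n → Fin k → ℝ) : Prop := ∀ i l, nxt (z i) l ≤ z i l

/-- Doubly stochastic `k × k` matrix. -/
def DS {k : ℕ} (M : Fin k → Fin k → ℝ) : Prop :=
  (∀ s t, 0 ≤ M s t) ∧ (∀ s, ∑ t, M s t = 1) ∧ (∀ t, ∑ s, M s t = 1)

/-- The permutation matrix of `π`. -/
def permMat {k : ℕ} (π : Equiv.Perm (Fin k)) : Fin k → Fin k → ℝ :=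
  fun s t => if π s = t then 1 else 0

/-- Aggregate utility `U(z) = ∑ i, ∑ l, h i l * v i (z i l)`. -/
def U {n k : ℕ} (h : Fin n → Fin k → ℝ) (v : Fin n → ℝ → ℝ)
    (z : Fin n → Fin k → ℝ) : ℝ :=
  ∑ i, ∑ l, h i l * v i (z i l)

/-- Lagrangian of the system problem. -/
def ThS {n m k : ℕ} (h : Fin n → Fin k → ℝ) (v : Fin n → ℝ → ℝ)
    (c : Fin m → ℝ) (J : Fin n → Finset (Fin m))
    (π : Fin n → Equiv.Perm (Fin k)) (z : Fin n → Fin k → ℝ)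
    (lam : Fin m → Fin k → ℝ) : ℝ :=
  U h v z + ∑ j, ∑ l, lam j l * (c j - ∑ i ∈ univ.filter (fun i => j ∈ J i), z i (π i l))

/-- Lagrangian of the relaxed system problem (doubly stochastic matrices). -/
def ThR {n m k : ℕ} (h : Fin n → Fin k → ℝ) (v : Fin n → ℝ → ℝ)
    (c : Fin m → ℝ) (J : Fin n → Finset (Fin m))
    (M : Fin n → Fin k → Fin k → ℝ) (z : Fin n → Fin k → ℝ)
    (lam : Fin m → Fin k → ℝ) : ℝ :=
  U h v z + ∑ j, ∑ l, lam j l *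
    (c j - ∑ i ∈ univ.filter (fun i => j ∈ J i), ∑ t, M i l t * z i t)

/-- Lagrangian of the average system problem. -/
def ThA {n m k : ℕ} (h : Fin n → Fin k → ℝ) (v : Fin n → ℝ → ℝ)
    (c : Fin m → ℝ) (J : Fin n → Finset (Fin m))
    (z : Fin n → Fin k → ℝ) (lamb : Fin m → ℝ) : ℝ :=
  U h v z + ∑ j, lamb j *
    (c j - ∑ i ∈ univ.filter (fun i => j ∈ J i), (1 / (k : ℝ)) * ∑ l, z i l)

/-- Primal system value `W_ps` (sup-inf). -/
def Wps (n m k : ℕ) (h : Fin n → Fin k → ℝ) (v : Fin n → ℝ → ℝ)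
    (c : Fin m → ℝ) (J : Fin n → Finset (Fin m)) : EReal :=
  ⨆ π : Fin n → Equiv.Perm (Fin k), ⨆ z : Fin n → Fin k → ℝ, ⨆ _ : OrdAlloc z,
    ⨅ lam : Fin m → Fin k → ℝ, ⨅ _ : ∀ j l, 0 ≤ lam j l, (ThS h v c J π z lam : EReal)

/-- Dual system value `W_ds` (inf-sup). -/
def Wds (n m k : ℕ) (h : Fin n → Fin k → ℝ) (v : Fin n → ℝ → ℝ)
    (c : Fin m → ℝ) (J : Fin n → Finset (Fin m)) : EReal :=
  ⨅ lam : Fin m → Fin k → ℝ, ⨅ _ : ∀ j l, 0 ≤ lam j l,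
    ⨆ π : Fin n → Equiv.Perm (Fin k), ⨆ z : Fin n → Fin k → ℝ, ⨆ _ : OrdAlloc z,
      (ThS h v c J π z lam : EReal)

/-- Relaxed primal value `W_pr` (sup-inf). -/
def Wpr (n m k : ℕ) (h : Fin n → Fin k → ℝ) (v : Fin n → ℝ → ℝ)
    (c : Fin m → ℝ) (J : Fin n → Finset (Fin m)) : EReal :=
  ⨆ M : Fin n → Fin k → Fin k → ℝ, ⨆ _ : ∀ i, DS (M i),
    ⨆ z : Fin n → Fin k → ℝ, ⨆ _ : OrdAlloc z,
      ⨅ lam : Fin m → Fin k → ℝ, ⨅ _ : ∀ j l, 0 ≤ lam j l, (ThR h v c J M z lam : EReal)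

/-- Relaxed dual value `W_dr` (inf-sup). -/
def Wdr (n m k : ℕ) (h : Fin n → Fin k → ℝ) (v : Fin n → ℝ → ℝ)
    (c : Fin m → ℝ) (J : Fin n → Finset (Fin m)) : EReal :=
  ⨅ lam : Fin m → Fin k → ℝ, ⨅ _ : ∀ j l, 0 ≤ lam j l,
    ⨆ M : Fin n → Fin k → Fin k → ℝ, ⨆ _ : ∀ i, DS (M i),
      ⨆ z : Fin n → Fin k → ℝ, ⨆ _ : OrdAlloc z, (ThR h v c J M z lam : EReal)

/-- Average primal value `W_pa` (sup-inf). -/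
def Wpa (n m k : ℕ) (h : Fin n → Fin k → ℝ) (v : Fin n → ℝ → ℝ)
    (c : Fin m → ℝ) (J : Fin n → Finset (Fin m)) : EReal :=
  ⨆ z : Fin n → Fin k → ℝ, ⨆ _ : OrdAlloc z,
    ⨅ lamb : Fin m → ℝ, ⨅ _ : ∀ j, 0 ≤ lamb j, (ThA h v c J z lamb : EReal)

/-- Average dual value `W_da` (inf-sup). -/
def Wda (n m k : ℕ) (h : Fin n → Fin k → ℝ) (v : Fin n → ℝ → ℝ)
    (c : Fin m → ℝ) (J : Fin n → Finset (Fin m)) : EReal :=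
  ⨅ lamb : Fin m → ℝ, ⨅ _ : ∀ j, 0 ≤ lamb j,
    ⨆ z : Fin n → Fin k → ℝ, ⨆ _ : OrdAlloc z, (ThA h v c J z lamb : EReal)

/-! For fixed prices `lam` and allocation `z`, the relaxed Lagrangian depends on each `M i` only
through the subtracted linear term `routeCost lam J z i (M i)`. By Birkhoff's theorem the doubly
stochastic matrices are the convex hull of the permutation matrices, so a concave (in particular a
linear) function attains its minimum over them at a permutation matrix. Choosing such a permutation
for every player maximizes the relaxed Lagrangian, so the inner suprema defining `W_dr` and `W_ds`
agree for every `lam`. -/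

theorem exists_perm_forall_permMatrix_le_of_concaveOn {R ι : Type*} [Field R] [LinearOrder R]
    [IsStrictOrderedRing R] [Fintype ι] [DecidableEq ι] {f : Matrix ι ι R → R}
    (hf : ConcaveOn R (doublyStochastic R ι) f) :
    ∃ σ : Equiv.Perm ι, ∀ M ∈ doublyStochastic R ι, f (σ.permMatrix R) ≤ f M := by
  obtain ⟨σ, -, hσ⟩ := Finset.exists_min_image univ (fun σ : Equiv.Perm ι => f (σ.permMatrix R))
    univ_nonempty
  refine ⟨σ, fun M hM => ?_⟩
  rw [← SetLike.mem_coe, doublyStochastic_eq_convexHull_permMatrix] at hM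
  obtain ⟨_, ⟨τ, rfl⟩, hτ⟩ := hf.exists_le_of_mem_convexHull
    (by rintro _ ⟨τ, rfl⟩; exact permMatrix_mem_doublyStochastic) hM
  exact (hσ τ (mem_univ τ)).trans hτ

theorem DS_iff_mem_doublyStochastic {k : ℕ} (M : Fin k → Fin k → ℝ) :
    DS M ↔ Matrix.of M ∈ doublyStochastic ℝ (Fin k) := by
  rw [mem_doublyStochastic_iff_sum]
  rfl

theorem of_permMat {k : ℕ} (σ : Equiv.Perm (Fin k)) :
    Matrix.of (permMat σ) = σ.permMatrix ℝ := by
  ext s t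
  simp [permMat, Equiv.Perm.permMatrix, PEquiv.toMatrix_apply]

theorem DS_permMat {k : ℕ} (σ : Equiv.Perm (Fin k)) : DS (permMat σ) := by
  rw [DS_iff_mem_doublyStochastic, of_permMat]
  exact permMatrix_mem_doublyStochastic

def routeCost {n m k : ℕ} (lam : Fin m → Fin k → ℝ) (J : Fin n → Finset (Fin m))
    (z : Fin n → Fin k → ℝ) (i : Fin n) : Matrix (Fin k) (Fin k) ℝ →ₗ[ℝ] ℝ :=
  ∑ l, ∑ t, ((∑ j ∈ J i, lam j l) * z i t) • Matrix.entryLinearMap ℝ ℝ l t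

theorem routeCost_apply {n m k : ℕ} (lam : Fin m → Fin k → ℝ) (J : Fin n → Finset (Fin m))
    (z : Fin n → Fin k → ℝ) (i : Fin n) (M : Matrix (Fin k) (Fin k) ℝ) :
    routeCost lam J z i M = ∑ l, ∑ t, (∑ j ∈ J i, lam j l) * z i t * M l t := by
  simp [routeCost]

theorem ThR_eq_sub_sum_routeCost {n m k : ℕ} (h : Fin n → Fin k → ℝ) (v : Fin n → ℝ → ℝ)
    (c : Fin m → ℝ) (J : Fin n → Finset (Fin m)) (M : Fin n → Fin k → Fin k → ℝ)
    (z : Fin n → Fin k → ℝ) (lam : Fin m → Fin k → ℝ) :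
    ThR h v c J M z lam =
      U h v z + ∑ j, ∑ l, lam j l * c j - ∑ i, routeCost lam J z i (Matrix.of (M i)) := by
  simp only [ThR, routeCost_apply, mul_sub, sum_sub_distrib, add_sub_assoc, Matrix.of_apply]
  congr 2
  calc ∑ j, ∑ l, lam j l * ∑ i ∈ univ.filter (fun i => j ∈ J i), ∑ t, M i l t * z i t
      = ∑ j, ∑ i ∈ univ.filter (fun i => j ∈ J i), ∑ l, ∑ t, lam j l * z i t * M i l t := by
        simp only [mul_sum, mul_comm, mul_left_comm]
        exact sum_congr rfl fun j _ => sum_comm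
    _ = ∑ i, ∑ j ∈ J i, ∑ l, ∑ t, lam j l * z i t * M i l t :=
        sum_comm' fun j i => by simp
    _ = ∑ i, ∑ l, ∑ t, (∑ j ∈ J i, lam j l) * z i t * M i l t := by
        refine sum_congr rfl fun i _ => ?_
        rw [sum_comm]
        simp only [sum_mul]
        exact sum_congr rfl fun l _ => sum_comm

theorem ThS_eq_ThR_permMat {n m k : ℕ} (h : Fin n → Fin k → ℝ) (v : Fin n → ℝ → ℝ)
    (c : Fin m → ℝ) (J : Fin n → Finset (Fin m)) (π : Fin n → Equiv.Perm (Fin k))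
    (z : Fin n → Fin k → ℝ) (lam : Fin m → Fin k → ℝ) :
    ThS h v c J π z lam = ThR h v c J (fun i => permMat (π i)) z lam := by
  simp [ThS, ThR, permMat, ite_mul]

theorem exists_perm_forall_ThR_le {n m k : ℕ} (h : Fin n → Fin k → ℝ) (v : Fin n → ℝ → ℝ)
    (c : Fin m → ℝ) (J : Fin n → Finset (Fin m)) (z : Fin n → Fin k → ℝ)
    (lam : Fin m → Fin k → ℝ) :
    ∃ π : Fin n → Equiv.Perm (Fin k), ∀ M : Fin n → Fin k → Fin k → ℝ, (∀ i, DS (M i)) →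
      ThR h v c J M z lam ≤ ThR h v c J (fun i => permMat (π i)) z lam := by
  choose π hπ using fun i => exists_perm_forall_permMatrix_le_of_concaveOn
    ((routeCost lam J z i).concaveOn (convex_doublyStochastic (R := ℝ) (n := Fin k)))
  refine ⟨π, fun M hM => ?_⟩
  simp only [ThR_eq_sub_sum_routeCost, of_permMat]
  gcongr with i
  exact hπ i _ ((DS_iff_mem_doublyStochastic _).1 (hM i))

theorem iSup_ThR_eq_iSup_ThS {n m k : ℕ} (h : Fin n → Fin k → ℝ) (v : Fin n → ℝ → ℝ)
    (c : Fin m → ℝ) (J : Fin n → Finset (Fin m)) (lam : Fin m → Fin k → ℝ) :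
    (⨆ M : Fin n → Fin k → Fin k → ℝ, ⨆ _ : ∀ i, DS (M i),
      ⨆ z : Fin n → Fin k → ℝ, ⨆ _ : OrdAlloc z, (ThR h v c J M z lam : EReal))
    = ⨆ π : Fin n → Equiv.Perm (Fin k), ⨆ z : Fin n → Fin k → ℝ, ⨆ _ : OrdAlloc z,
        (ThS h v c J π z lam : EReal) := by
  apply le_antisymm
  · refine iSup₂_le fun M hM => iSup₂_le fun z hz => ?_
    obtain ⟨π, hπ⟩ := exists_perm_forall_ThR_le h v c J z lam
    refine le_iSup_of_le π (le_iSup₂_of_le z hz ?_)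
    rw [ThS_eq_ThR_permMat]
    exact EReal.coe_le_coe (hπ M hM)
  · refine iSup_le fun π => iSup₂_le fun z hz => ?_
    rw [ThS_eq_ThR_permMat]
    exact le_iSup₂_of_le (fun i => permMat (π i)) (fun i => DS_permMat (π i))
      (le_iSup₂_of_le z hz le_rfl)

theorem stmt12_general (n m k : ℕ)
    (c : Fin m → ℝ)
    (J : Fin n → Finset (Fin m))
    (v : Fin n → ℝ → ℝ)
    (h : Fin n → Fin k → ℝ) :
    Wdr n m k h v c J = Wds n m k h v c J ∧
    ∀ lam : Fin m → Fin k → ℝ, (∀ j l, 0 ≤ lam j l) →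
      ∀ z : Fin n → Fin k → ℝ, OrdAlloc z →
        ∃ π : Fin n → Equiv.Perm (Fin k),
          ∀ M : Fin n → Fin k → Fin k → ℝ, (∀ i, DS (M i)) →
            ThR h v c J M z lam ≤ ThR h v c J (fun i => permMat (π i)) z lam :=
  ⟨iInf_congr fun lam => iInf_congr fun _ => iSup_ThR_eq_iSup_ThS h v c J lam,
    fun lam _ z _ => exists_perm_forall_ThR_le h v c J z lam⟩

/-- The relaxed dual value equals the system dual value: `W_dr = W_ds`.
In particular, for every fixed `λ ≥ 0` and ordered `z`, the supremum over doubly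
stochastic profiles `(M i)` of the relaxed Lagrangian is attained at a profile of
permutation matrices. -/
theorem stmt12 (n m k : ℕ) (hk : 1 ≤ k)
    (c : Fin m → ℝ) (hc : ∀ j, 0 < c j)
    (J : Fin n → Finset (Fin m)) (hJ : ∀ i, (J i).Nonempty)
    (v : Fin n → ℝ → ℝ)
    (hvc : ∀ i, ContinuousOn (v i) (Set.Ici 0))
    (hvd : ∀ i, DifferentiableOn ℝ (v i) (Set.Ici 0))
    (hvcc : ∀ i, ConcaveOn ℝ (Set.Ici 0) (v i))
    (hvm : ∀ i, StrictMonoOn (v i) (Set.Ici 0))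
    (hvnn : ∀ i, ∀ x ∈ Set.Ici (0 : ℝ), 0 ≤ v i x)
    (h : Fin n → Fin k → ℝ) (hh : ∀ i l, 0 < h i l) :
    Wdr n m k h v c J = Wds n m k h v c J ∧
    ∀ lam : Fin m → Fin k → ℝ, (∀ j l, 0 ≤ lam j l) →
      ∀ z : Fin n → Fin k → ℝ, OrdAlloc z →
        ∃ π : Fin n → Equiv.Perm (Fin k),
          ∀ M : Fin n → Fin k → Fin k → ℝ, (∀ i, DS (M i)) →
            ThR h v c J M z lam ≤ ThR h v c J (fun i => permMat (π i)) z lam :=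
  stmt12_general n m k c J v h
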